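/- Let p and q be odd primes and consider the permutations of ℤ_p × ℤ_{2q} given by μ(i,j) = (i+1,j), σν(i,j) = (-i,j+1), and τ(i,j) = (-i,-j), and let H = ⟨μ, σν, τ⟩, a subgroup of the symmetric group on ℤ_p × ℤ_{2q}. Then the minimal normal subgroups of H are exactly ⟨μ⟩ and ⟨ν²⟩, where ν² is the permutation (i,j) ↦ (i,j+2). -/

import Mathlib

open SimpleGraph

namespace OG4

variable {V : Type*} {W : Type*}

/-! ### Normal quotients, cycles, and basic pairs -/

/-- The setoid of orbits of a group `N` of permutations of `V`. -/
def orbitSetoid (N : Subgroup (Equiv.Perm V)) : Setoid V := MulAction.orbitRel N V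

/-- The (normal) quotient graph of a graph `Γ` with respect to a group `N` of permutations:
its vertices are the `N`-orbits, two distinct orbits being adjacent iff some vertex of one is
adjacent in `Γ` to some vertex of the other. -/
def quotientGraph (Γ : SimpleGraph V) (N : Subgroup (Equiv.Perm V)) :
    SimpleGraph (Quotient (orbitSetoid N)) :=
  SimpleGraph.fromRel fun a b =>
    ∃ x y : V, Quotient.mk (orbitSetoid N) x = a ∧ Quotient.mk (orbitSetoid N) y = b ∧ Γ.Adj x y

/-- `N` is a normal subgroup of the subgroup `G` (of some ambient group). -/
def NormalIn {G : Type*} [Group G] (N H : Subgroup G) : Prop :=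
  N ≤ H ∧ ∀ h ∈ H, ∀ n ∈ N, h * n * h⁻¹ ∈ N

/-- A graph is isomorphic to a cycle graph `C_m` for some `m ≥ 3`. -/
def IsoCycle (Δ : SimpleGraph W) : Prop :=
  ∃ m : ℕ, 3 ≤ m ∧ Nonempty (Δ ≃g SimpleGraph.cycleGraph m)

/-- Every normal quotient of `(Γ, G)` relative to a nontrivial normal subgroup is degenerate:
it has at most 2 vertices or is a cycle. -/
def IsBasic (Γ : SimpleGraph V) (G : Subgroup (Equiv.Perm V)) : Prop :=
  ∀ N : Subgroup (Equiv.Perm V), NormalIn N G → N ≠ ⊥ →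
    Nat.card (Quotient (orbitSetoid N)) ≤ 2 ∨ IsoCycle (quotientGraph Γ N)

/-- `(Γ, G)` is basic of cycle type. -/
def BasicOfCycleType (Γ : SimpleGraph V) (G : Subgroup (Equiv.Perm V)) : Prop :=
  IsBasic Γ G ∧
    ∃ N : Subgroup (Equiv.Perm V), NormalIn N G ∧ N ≠ ⊥ ∧ IsoCycle (quotientGraph Γ N)

/-- The kernel of the action of `G` on the set of `N`-orbits. -/
def orbitKernel (G N : Subgroup (Equiv.Perm V)) : Subgroup (Equiv.Perm V) where
  carrier := {g | g ∈ G ∧ ∀ x : V,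
    Quotient.mk (orbitSetoid N) (g x) = Quotient.mk (orbitSetoid N) x}
  one_mem' := ⟨G.one_mem, fun x => by simp⟩
  mul_mem' := by
    rintro a b ⟨haG, ha⟩ ⟨hbG, hb⟩
    refine ⟨G.mul_mem haG hbG, fun x => ?_⟩
    rw [Equiv.Perm.mul_apply, ha (b x), hb x]
  inv_mem' := by
    rintro a ⟨haG, ha⟩
    refine ⟨G.inv_mem haG, fun x => ?_⟩
    have h := ha (a⁻¹ x)
    rw [show a (a⁻¹ x) = x from a.apply_symm_apply x] at h
    exact h.symm

/-- `(Γ, G)` has a pair of independent cyclic normal quotients. -/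
def HasIndepCyclicQuotients (Γ : SimpleGraph V) (G : Subgroup (Equiv.Perm V)) : Prop :=
  ∃ N M : Subgroup (Equiv.Perm V), NormalIn N G ∧ NormalIn M G ∧
    IsoCycle (quotientGraph Γ N) ∧ IsoCycle (quotientGraph Γ M) ∧
    ¬ IsoCycle (quotientGraph Γ (orbitKernel G N ⊓ orbitKernel G M))

/-- `(Γ, G)` is basic of independent-cycle type. -/
def BasicOfIndependentCycleType (Γ : SimpleGraph V) (G : Subgroup (Equiv.Perm V)) : Prop :=
  IsBasic Γ G ∧ HasIndepCyclicQuotients Γ G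

/-- Isomorphism of graph-group pairs: a graph isomorphism conjugating one group onto the other. -/
def PairIso (Γ : SimpleGraph V) (G : Subgroup (Equiv.Perm V))
    (Δ : SimpleGraph W) (H : Subgroup (Equiv.Perm W)) : Prop :=
  ∃ e : Γ ≃g Δ, ∀ h : Equiv.Perm W, h ∈ H ↔ ∃ g ∈ G, e.toEquiv.permCongr g = h

/-! ### Minimal normal subgroups -/

/-- `M` is a minimal normal subgroup of the ambient group. -/
def IsMinimalNormal {G : Type*} [Group G] (M : Subgroup G) : Prop :=
  M.Normal ∧ M ≠ ⊥ ∧ ∀ N : Subgroup G, N.Normal → N ≤ M → N = ⊥ ∨ N = M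

/-- `M` is a minimal normal subgroup of the subgroup `H`. -/
def IsMinimalNormalIn {G : Type*} [Group G] (M H : Subgroup G) : Prop :=
  NormalIn M H ∧ M ≠ ⊥ ∧ ∀ N : Subgroup G, NormalIn N H → N ≤ M → N = ⊥ ∨ N = M

/-! ### The graphs `Γ(r,s)` and their automorphisms -/

/-- In `Γ(r,s)`, the vertex `(i,j)` is joined to the four vertices `(i ± 1, j ± 1)`. -/
def gammaRel (r s : ℕ) (x y : ZMod r × ZMod s) : Prop :=
  (y.1 = x.1 + 1 ∨ y.1 = x.1 - 1) ∧ (y.2 = x.2 + 1 ∨ y.2 = x.2 - 1)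

/-- The graph `Γ(r,s)` on `ℤ_r × ℤ_s`. -/
def Gamma (r s : ℕ) : SimpleGraph (ZMod r × ZMod s) := SimpleGraph.fromRel (gammaRel r s)

/-- `μ : (i,j) ↦ (i+1, j)`. -/
def mu (r s : ℕ) : Equiv.Perm (ZMod r × ZMod s) :=
  (Equiv.addRight (1 : ZMod r)).prodCongr (Equiv.refl (ZMod s))

/-- `ν : (i,j) ↦ (i, j+1)`. -/
def nu (r s : ℕ) : Equiv.Perm (ZMod r × ZMod s) :=
  (Equiv.refl (ZMod r)).prodCongr (Equiv.addRight (1 : ZMod s))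

/-- `σ : (i,j) ↦ (-i, j)`. -/
def sigma (r s : ℕ) : Equiv.Perm (ZMod r × ZMod s) :=
  (Equiv.neg (ZMod r)).prodCongr (Equiv.refl (ZMod s))

/-- `τ : (i,j) ↦ (-i, -j)`. -/
def tau (r s : ℕ) : Equiv.Perm (ZMod r × ZMod s) :=
  (Equiv.neg (ZMod r)).prodCongr (Equiv.neg (ZMod s))

/-- `σν : (i,j) ↦ (-i, j+1)`. -/
def sigmaNu (r s : ℕ) : Equiv.Perm (ZMod r × ZMod s) :=
  (Equiv.neg (ZMod r)).prodCongr (Equiv.addRight (1 : ZMod s))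

/-- `μν : (i,j) ↦ (i+1, j+1)`. -/
def muNu (r s : ℕ) : Equiv.Perm (ZMod r × ZMod s) :=
  (Equiv.addRight (1 : ZMod r)).prodCongr (Equiv.addRight (1 : ZMod s))

/-- `σμν : (i,j) ↦ (-(i+1), j+1)`. -/
def sigmaMuNu (r s : ℕ) : Equiv.Perm (ZMod r × ZMod s) :=
  ((Equiv.addRight (1 : ZMod r)).trans (Equiv.neg (ZMod r))).prodCongr
    (Equiv.addRight (1 : ZMod s))

/-- `μ² : (i,j) ↦ (i+2, j)`. -/
def muSq (r s : ℕ) : Equiv.Perm (ZMod r × ZMod s) :=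
  (Equiv.addRight (2 : ZMod r)).prodCongr (Equiv.refl (ZMod s))

/-- `ν² : (i,j) ↦ (i, j+2)`. -/
def nuSq (r s : ℕ) : Equiv.Perm (ZMod r × ZMod s) :=
  (Equiv.refl (ZMod r)).prodCongr (Equiv.addRight (2 : ZMod s))

/-- `μ^k : (i,j) ↦ (i+k, j)`. -/
def muPow (r s k : ℕ) : Equiv.Perm (ZMod r × ZMod s) :=
  (Equiv.addRight ((k : ZMod r))).prodCongr (Equiv.refl (ZMod s))

/-- `μ^k ν² : (i,j) ↦ (i+k, j+2)`. -/
def muPowNuSq (r s k : ℕ) : Equiv.Perm (ZMod r × ZMod s) :=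
  (Equiv.addRight ((k : ZMod r))).prodCongr (Equiv.addRight (2 : ZMod s))

/-- `G(r,s) = ⟨μ, ν, σ⟩`. -/
def Ggroup (r s : ℕ) : Subgroup (Equiv.Perm (ZMod r × ZMod s)) :=
  Subgroup.closure {mu r s, nu r s, sigma r s}

/-- `H(r,s) = ⟨μ, σν, τ⟩`. -/
def Hgroup (r s : ℕ) : Subgroup (Equiv.Perm (ZMod r × ZMod s)) :=
  Subgroup.closure {mu r s, sigmaNu r s, tau r s}

/-! ### The graphs `Γ⁺(r,s)` (for `r`, `s` even) -/

/-- `X⁺`: the set of `(i,j)` with `i` and `j` of the same parity. -/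
def XPlus (r s : ℕ) : Set (ZMod r × ZMod s) := {x | x.1.val % 2 = x.2.val % 2}

/-- `Γ⁺(r,s)`, the subgraph of `Γ(r,s)` induced on `X⁺`. -/
def GammaPlus (r s : ℕ) : SimpleGraph (XPlus r s) :=
  SimpleGraph.induce (XPlus r s) (Gamma r s)

section parity

lemma val_add_one_mod_two (r : ℕ) (hr : 2 ∣ r) (hr0 : r ≠ 0) (i : ZMod r) :
    (i + 1).val % 2 = (i.val + 1) % 2 := by
  haveI : NeZero r := ⟨hr0⟩
  haveI : Fact (1 < r) := ⟨by have := Nat.le_of_dvd (Nat.pos_of_ne_zero hr0) hr; omega⟩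
  rw [ZMod.val_add, Nat.mod_mod_of_dvd _ hr, ZMod.val_one]

lemma val_add_two_mod_two (r : ℕ) (hr : 2 ∣ r) (hr0 : r ≠ 0) (i : ZMod r) :
    (i + 2).val % 2 = i.val % 2 := by
  have h1 := val_add_one_mod_two r hr hr0 i
  have h2 := val_add_one_mod_two r hr hr0 (i + 1)
  rw [show i + 1 + 1 = i + 2 by ring] at h2
  omega

lemma val_neg_mod_two (r : ℕ) (hr : 2 ∣ r) (hr0 : r ≠ 0) (i : ZMod r) :
    (-i).val % 2 = i.val % 2 := by
  haveI : NeZero r := ⟨hr0⟩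
  rcases eq_or_ne i 0 with h | h
  · simp [h]
  · have h1 : (-i).val = r - i.val := by rw [ZMod.neg_val]; simp [h]
    have h2 : i.val < r := ZMod.val_lt i
    have h3 : i.val ≠ 0 := fun hh => h ((ZMod.val_eq_zero i).mp hh)
    obtain ⟨t, rfl⟩ := hr
    rw [h1]
    omega

end parity

section plusPerms

variable (r s : ℕ)

/-- The restriction of `μ²` to `X⁺`. -/
def muSqP (hr : 2 ∣ r) (hr0 : r ≠ 0) : Equiv.Perm (XPlus r s) :=
  (muSq r s).subtypePerm (by
    intro x
    have h := val_add_two_mod_two r hr hr0 x.1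
    simp only [XPlus, Set.mem_setOf_eq, muSq, Equiv.prodCongr_apply, Prod.map,
      Equiv.coe_addRight, Equiv.refl_apply]
    omega)

/-- The restriction of `ν²` to `X⁺`. -/
def nuSqP (hs : 2 ∣ s) (hs0 : s ≠ 0) : Equiv.Perm (XPlus r s) :=
  (nuSq r s).subtypePerm (by
    intro x
    have h := val_add_two_mod_two s hs hs0 x.2
    simp only [XPlus, Set.mem_setOf_eq, nuSq, Equiv.prodCongr_apply, Prod.map,
      Equiv.coe_addRight, Equiv.refl_apply]
    omega)

/-- The restriction of `μν` to `X⁺`. -/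
def muNuP (hr : 2 ∣ r) (hr0 : r ≠ 0) (hs : 2 ∣ s) (hs0 : s ≠ 0) : Equiv.Perm (XPlus r s) :=
  (muNu r s).subtypePerm (by
    intro x
    have h1 := val_add_one_mod_two r hr hr0 x.1
    have h2 := val_add_one_mod_two s hs hs0 x.2
    simp only [XPlus, Set.mem_setOf_eq, muNu, Equiv.prodCongr_apply, Prod.map,
      Equiv.coe_addRight]
    omega)

/-- The restriction of `σ` to `X⁺`. -/
def sigmaP (hr : 2 ∣ r) (hr0 : r ≠ 0) : Equiv.Perm (XPlus r s) :=
  (sigma r s).subtypePerm (by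
    intro x
    have h := val_neg_mod_two r hr hr0 x.1
    simp only [XPlus, Set.mem_setOf_eq, sigma, Equiv.prodCongr_apply, Prod.map,
      Equiv.neg_apply, Equiv.refl_apply]
    omega)

/-- The restriction of `τ` to `X⁺`. -/
def tauP (hr : 2 ∣ r) (hr0 : r ≠ 0) (hs : 2 ∣ s) (hs0 : s ≠ 0) : Equiv.Perm (XPlus r s) :=
  (tau r s).subtypePerm (by
    intro x
    have h1 := val_neg_mod_two r hr hr0 x.1
    have h2 := val_neg_mod_two s hs hs0 x.2
    simp only [XPlus, Set.mem_setOf_eq, tau, Equiv.prodCongr_apply, Prod.map,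
      Equiv.neg_apply]
    omega)

/-- The restriction of `σμν` to `X⁺`. -/
def sigmaMuNuP (hr : 2 ∣ r) (hr0 : r ≠ 0) (hs : 2 ∣ s) (hs0 : s ≠ 0) :
    Equiv.Perm (XPlus r s) :=
  (sigmaMuNu r s).subtypePerm (by
    intro x
    have h1 := val_neg_mod_two r hr hr0 (x.1 + 1)
    have h2 := val_add_one_mod_two r hr hr0 x.1
    have h3 := val_add_one_mod_two s hs hs0 x.2
    simp only [XPlus, Set.mem_setOf_eq, sigmaMuNu, Equiv.prodCongr_apply, Prod.map,
      Equiv.trans_apply, Equiv.coe_addRight, Equiv.neg_apply]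
    omega)

/-- `G⁺(r,s) = ⟨μ², μν, σ⟩` acting on `X⁺`. -/
def GPlusGroup (hr : 2 ∣ r) (hr0 : r ≠ 0) (hs : 2 ∣ s) (hs0 : s ≠ 0) :
    Subgroup (Equiv.Perm (XPlus r s)) :=
  Subgroup.closure {muSqP r s hr hr0, muNuP r s hr hr0 hs hs0, sigmaP r s hr hr0}

/-- `H⁺(r,s) = ⟨μ², σμν, τ⟩` acting on `X⁺`. -/
def HPlusGroup (hr : 2 ∣ r) (hr0 : r ≠ 0) (hs : 2 ∣ s) (hs0 : s ≠ 0) :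
    Subgroup (Equiv.Perm (XPlus r s)) :=
  Subgroup.closure
    {muSqP r s hr hr0, sigmaMuNuP r s hr hr0 hs hs0, tauP r s hr hr0 hs hs0}

end plusPerms

/-! ### The standard double cover `Γ₂(r,s)` -/

/-- Adjacency of the double cover: `(i,j)_δ ~ (i ± 1, j ± 1)_{δ+1}`. -/
def gamma2Rel (r s : ℕ) (x y : (ZMod r × ZMod s) × ZMod 2) : Prop :=
  (y.1.1 = x.1.1 + 1 ∨ y.1.1 = x.1.1 - 1) ∧ (y.1.2 = x.1.2 + 1 ∨ y.1.2 = x.1.2 - 1) ∧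
    y.2 = x.2 + 1

/-- `Γ₂(r,s)`, the standard double cover of `Γ(r,s)`. -/
def Gamma2 (r s : ℕ) : SimpleGraph ((ZMod r × ZMod s) × ZMod 2) :=
  SimpleGraph.fromRel (gamma2Rel r s)

/-- `μ : (i,j)_δ ↦ (i+1, j)_δ` on the double cover. -/
def muD (r s : ℕ) : Equiv.Perm ((ZMod r × ZMod s) × ZMod 2) :=
  (mu r s).prodCongr (Equiv.refl (ZMod 2))

/-- `ν : (i,j)_δ ↦ (i, j+1)_δ` on the double cover. -/
def nuD (r s : ℕ) : Equiv.Perm ((ZMod r × ZMod s) × ZMod 2) :=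
  (nu r s).prodCongr (Equiv.refl (ZMod 2))

/-- `σ : (i,j)_δ ↦ (i, -j)_{δ+1}` on the double cover. -/
def sigmaD (r s : ℕ) : Equiv.Perm ((ZMod r × ZMod s) × ZMod 2) :=
  ((Equiv.refl (ZMod r)).prodCongr (Equiv.neg (ZMod s))).prodCongr
    (Equiv.addRight (1 : ZMod 2))

/-- `τ : (i,j)_δ ↦ (-i, -j)_δ` on the double cover. -/
def tauD (r s : ℕ) : Equiv.Perm ((ZMod r × ZMod s) × ZMod 2) :=
  (tau r s).prodCongr (Equiv.refl (ZMod 2))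

/-- `G₂(r,s) = ⟨μ, ν, σ, τ⟩` on the double cover. -/
def G2group (r s : ℕ) : Subgroup (Equiv.Perm ((ZMod r × ZMod s) × ZMod 2)) :=
  Subgroup.closure {muD r s, nuD r s, sigmaD r s, tauD r s}

/-!
Every element of `H(p,2q)` is an affine map `(i, j) ↦ (±i + a, ±j + b)` whose two signs agree
exactly when `b` is even. Hence a nontrivial normal subgroup `N` contains a nonzero translation
by some `(a, b)` with `b` even: either the element itself, or its commutator with `μ` or with
`σν`. If `a ≠ 0`, the commutator of that translation with `σν` is a nontrivial power of `μ`;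
if `a = 0`, the translation is a nontrivial power of `ν²`. As `⟨μ⟩` and `⟨ν²⟩` are normal in `H`
of prime orders `p` and `q`, they are the minimal normal subgroups.
-/

open Equiv Subgroup

section NormalIn

variable {G : Type*} [Group G]

theorem eq_bot_or_eq_of_le_of_prime_card {K N : Subgroup G}
    (hK : (Nat.card K).Prime) (hNK : N ≤ K) : N = ⊥ ∨ N = K := by
  have : Finite K := Nat.finite_of_card_ne_zero hK.ne_zero
  rcases (Nat.dvd_prime hK).1 (card_dvd_of_le hNK) with h | h
  · exact .inl (card_eq_one.1 h)
  · exact .inr (eq_of_le_of_card_ge hNK h.ge)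

theorem mem_of_mem_zpowers_of_prime_orderOf {N : Subgroup G} {g x : G}
    (hg : (orderOf g).Prime) (hx : x ∈ zpowers g) (hx1 : x ≠ 1) (hxN : x ∈ N) : g ∈ N := by
  rw [← Nat.card_zpowers] at hg
  rcases eq_bot_or_eq_of_le_of_prime_card hg (inf_le_right : N ⊓ zpowers g ≤ _) with h | h
  · exact absurd (h ▸ mem_inf.2 ⟨hxN, hx⟩ : x ∈ (⊥ : Subgroup G)) hx1
  · exact (mem_inf.1 (h ▸ mem_zpowers g)).1

theorem mem_normalizer_zpowers_of_conj {g x : G}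
    (h : g * x * g⁻¹ = x ∨ g * x * g⁻¹ = x⁻¹) : g ∈ normalizer (zpowers x : Set G) := by
  rw [mem_normalizer_iff_map_conj_eq, MonoidHom.map_zpowers]
  rcases h with h | h <;> simp only [MonoidHom.coe_coe, MulAut.conj_apply, h]
  exact zpowers_inv

theorem normalIn_zpowers_closure {S : Set G} {x : G} (hx : x ∈ closure S)
    (hS : ∀ g ∈ S, g * x * g⁻¹ = x ∨ g * x * g⁻¹ = x⁻¹) :
    NormalIn (zpowers x) (closure S) := by
  have hN : closure S ≤ normalizer (zpowers x : Set G) :=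
    (closure_le _).2 fun g hg => mem_normalizer_zpowers_of_conj (hS g hg)
  exact ⟨zpowers_le.2 hx, fun h hh n hn => (mem_normalizer_iff.1 (hN hh) n).1 hn⟩

theorem NormalIn.commutator_mem {N H : Subgroup G} (hN : NormalIn N H) {h g : G} (hh : h ∈ H)
    (hg : g ∈ N) : h * g * h⁻¹ * g⁻¹ ∈ N :=
  mul_mem (hN.2 h hh g hg) (inv_mem hg)

theorem isMinimalNormalIn_zpowers {H : Subgroup G} {x : G} (hx : (orderOf x).Prime)
    (hxH : NormalIn (zpowers x) H) : IsMinimalNormalIn (zpowers x) H := by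
  refine ⟨hxH, fun h => hx.ne_one ?_, fun N _ hN => ?_⟩
  · rw [orderOf_eq_one_iff, ← zpowers_eq_bot, h]
  · exact eq_bot_or_eq_of_le_of_prime_card (Nat.card_zpowers x ▸ hx) hN

theorem IsMinimalNormalIn.eq_of_le {H M K : Subgroup G} (hM : IsMinimalNormalIn M H)
    (hK : IsMinimalNormalIn K H) (hKM : K ≤ M) : M = K :=
  ((hM.2.2 K hK.1 hKM).resolve_left hK.2.1).symm

end NormalIn

section Translations

variable {A : Type*} [AddGroup A]

theorem addRight_eq_one_iff {v : A} : Equiv.addRight v = 1 ↔ v = 0 :=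
  ⟨fun h => by simpa using congrArg (· 0) h, fun h => by rw [h, addRight_zero]⟩

theorem orderOf_addRight (v : A) : orderOf (Equiv.addRight v) = addOrderOf v := by
  rw [← orderOf_ofAdd_eq_addOrderOf, orderOf_eq_orderOf_iff]
  intro n
  rw [← zpow_natCast, zsmul_addRight, natCast_zsmul, addRight_eq_one_iff, ← ofAdd_nsmul,
    ofAdd_eq_one]

theorem addRight_mem_zpowers {v w : A} (h : w ∈ AddSubgroup.zmultiples v) :
    Equiv.addRight w ∈ zpowers (Equiv.addRight v) := by
  obtain ⟨k, rfl⟩ := h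
  exact ⟨k, zsmul_addRight v k⟩

end Translations

section Affine

variable {r s : ℕ}

theorem even_of_castHom_eq_zero (hs : 2 ∣ s) {b : ZMod s} (h : ZMod.castHom hs (ZMod 2) b = 0) :
    Even b := by
  rw [← ZMod.intCast_zmod_cast b, map_intCast, ZMod.intCast_zmod_eq_zero_iff_dvd] at h
  obtain ⟨c, hc⟩ := h
  exact ⟨c, by rw [← ZMod.intCast_zmod_cast b, hc]; push_cast; ring⟩

theorem two_ne_zero_zmod_two_mul {q : ℕ} (hq : 1 < q) : (2 : ZMod (2 * q)) ≠ 0 := by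
  rw [← Nat.cast_ofNat (R := ZMod (2 * q)) (n := 2), Ne, ZMod.natCast_eq_zero_iff]
  intro h
  have := Nat.le_of_dvd two_pos h
  omega

theorem castHom_cond_neg (hs : 2 ∣ s) (f : Bool) (b : ZMod s) :
    ZMod.castHom hs (ZMod 2) (cond f (-b) b) = ZMod.castHom hs (ZMod 2) b := by
  cases f <;> simp only [cond_true, cond_false, map_neg, ZMod.neg_eq_self_mod_two]

theorem natCast_toNat_xor (u v : Bool) : ((xor u v).toNat : ZMod 2) = u.toNat + v.toNat := by
  cases u <;> cases v <;> decide

def affPerm (e f : Bool) (a : ZMod r) (b : ZMod s) : Perm (ZMod r × ZMod s) :=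
  ((cond e (Equiv.neg _) 1).trans (Equiv.addRight a)).prodCongr
    ((cond f (Equiv.neg _) 1).trans (Equiv.addRight b))

@[simp]
theorem affPerm_apply (e f : Bool) (a : ZMod r) (b : ZMod s) (x : ZMod r × ZMod s) :
    affPerm e f a b x = (cond e (-x.1) x.1 + a, cond f (-x.2) x.2 + b) := by
  cases e <;> cases f <;> rfl

theorem affPerm_mul (e f e' f' : Bool) (a a' : ZMod r) (b b' : ZMod s) :
    affPerm e f a b * affPerm e' f' a' b' =
      affPerm (xor e e') (xor f f') (cond e (-a') a' + a) (cond f (-b') b' + b) := by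
  ext x <;> cases e <;> cases e' <;> cases f <;> cases f' <;> simp [Perm.mul_apply] <;> ring

theorem affPerm_inv (e f : Bool) (a : ZMod r) (b : ZMod s) :
    (affPerm e f a b)⁻¹ = affPerm e f (cond e a (-a)) (cond f b (-b)) :=
  inv_eq_of_mul_eq_one_right <| by
    ext x <;> cases e <;> cases f <;> simp [Perm.mul_apply]

theorem affPerm_false_false (a : ZMod r) (b : ZMod s) :
    affPerm false false a b = Equiv.addRight (a, b) := by
  ext x <;> simp

def affParitySubgroup (r : ℕ) (hs : 2 ∣ s) : Subgroup (Perm (ZMod r × ZMod s)) where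
  carrier := {g | ∃ e f a b, g = affPerm e f a b ∧
    (e.toNat + f.toNat : ZMod 2) = ZMod.castHom hs (ZMod 2) b}
  one_mem' := ⟨false, false, 0, 0, by ext x <;> simp, by simp⟩
  mul_mem' := by
    rintro _ _ ⟨e, f, a, b, rfl, h⟩ ⟨e', f', a', b', rfl, h'⟩
    refine ⟨_, _, _, _, affPerm_mul .., ?_⟩
    rw [natCast_toNat_xor, natCast_toNat_xor, map_add, castHom_cond_neg]
    linear_combination h + h'
  inv_mem' := by
    rintro _ ⟨e, f, a, b, rfl, h⟩
    refine ⟨_, _, _, _, affPerm_inv .., ?_⟩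
    rw [h]
    cases f <;> simp only [cond_true, cond_false, map_neg, ZMod.neg_eq_self_mod_two]

theorem Hgroup_le_affParitySubgroup (hs : 2 ∣ s) : Hgroup r s ≤ affParitySubgroup r hs := by
  rw [Hgroup, closure_le]
  rintro g (rfl | rfl | rfl)
  · exact ⟨false, false, 1, 0, by ext x <;> simp [mu], by rw [map_zero]; decide⟩
  · exact ⟨true, false, 0, 1, by ext x <;> simp [sigmaNu], by rw [map_one]; decide⟩
  · exact ⟨true, true, 0, 0, by ext x <;> simp [tau], by rw [map_zero]; decide⟩

end Affine

section Generators

variable {r s : ℕ}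

theorem mu_eq_addRight : mu r s = Equiv.addRight (1, 0) := by
  ext x <;> simp [mu]

theorem nuSq_eq_addRight : nuSq r s = Equiv.addRight (0, 2) := by
  ext x <;> simp [nuSq]

theorem nuSq_eq_sigmaNu_sq : nuSq r s = sigmaNu r s ^ 2 := by
  ext x <;> simp [nuSq, sigmaNu, sq, Perm.mul_apply, add_assoc, one_add_one_eq_two]

theorem mu_mem_Hgroup : mu r s ∈ Hgroup r s := subset_closure (by simp)

theorem sigmaNu_mem_Hgroup : sigmaNu r s ∈ Hgroup r s := subset_closure (by simp)

theorem orderOf_mu : orderOf (mu r s) = r := by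
  rw [mu_eq_addRight, orderOf_addRight, Prod.addOrderOf_mk, ZMod.addOrderOf_one, addOrderOf_zero,
    Nat.lcm_one_right]

theorem orderOf_nuSq {q : ℕ} (hq : q ≠ 0) : orderOf (nuSq r (2 * q)) = q := by
  rw [nuSq_eq_addRight, orderOf_addRight, Prod.addOrderOf_mk, addOrderOf_zero, Nat.lcm_one_left,
    ← Nat.cast_ofNat (R := ZMod (2 * q)) (n := 2), ZMod.addOrderOf_coe _ (by omega),
    Nat.gcd_mul_right_left]
  omega

theorem normalIn_zpowers_mu : NormalIn (zpowers (mu r s)) (Hgroup r s) := by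
  refine normalIn_zpowers_closure mu_mem_Hgroup ?_
  rintro g (rfl | rfl | rfl)
  · exact .inl (by group)
  · exact .inr (by ext x <;> simp [mu, sigmaNu, Perm.mul_apply, add_comm])
  · exact .inr (by ext x <;> simp [mu, tau, Perm.mul_apply, add_comm])

theorem normalIn_zpowers_nuSq : NormalIn (zpowers (nuSq r s)) (Hgroup r s) := by
  refine normalIn_zpowers_closure (nuSq_eq_sigmaNu_sq ▸ pow_mem sigmaNu_mem_Hgroup 2) ?_
  rintro g (rfl | rfl | rfl)
  · exact .inl (by ext x <;> simp [mu, nuSq, Perm.mul_apply])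
  · exact .inl (by ext x <;> simp [sigmaNu, nuSq, Perm.mul_apply, add_assoc])
  · exact .inr (by ext x <;> simp [nuSq, tau, Perm.mul_apply, add_comm])

theorem mu_commutator_affPerm_true (f : Bool) (a : ZMod r) (b : ZMod s) :
    mu r s * affPerm true f a b * (mu r s)⁻¹ * (affPerm true f a b)⁻¹ =
      Equiv.addRight (1 + 1, 0) := by
  ext x <;> cases f <;> simp [mu, affPerm_inv, Perm.mul_apply] <;> ring

theorem sigmaNu_commutator_affPerm_false_true (a : ZMod r) (b : ZMod s) :
    sigmaNu r s * affPerm false true a b * (sigmaNu r s)⁻¹ * (affPerm false true a b)⁻¹ =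
      Equiv.addRight (-(a + a), 2) := by
  ext x <;> simp [sigmaNu, affPerm_inv, Perm.mul_apply] <;> ring

theorem sigmaNu_commutator_addRight (a : ZMod r) (b : ZMod s) :
    sigmaNu r s * Equiv.addRight (a, b) * (sigmaNu r s)⁻¹ * (Equiv.addRight (a, b))⁻¹ =
      Equiv.addRight (-(a + a), 0) := by
  ext x <;> simp [sigmaNu, Perm.mul_apply] <;> ring

end Generators

section MinimalNormal

variable {p q : ℕ}

theorem mu_mem_or_nuSq_mem_of_addRight_mem (hp : p.Prime) (hpo : Odd p) (hq : q.Prime)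
    {N : Subgroup (Perm (ZMod p × ZMod (2 * q)))} (hN : NormalIn N (Hgroup p (2 * q)))
    {v : ZMod p × ZMod (2 * q)} (hv : v ≠ 0) (hv2 : Even v.2) (hvN : Equiv.addRight v ∈ N) :
    mu p (2 * q) ∈ N ∨ nuSq p (2 * q) ∈ N := by
  obtain ⟨a, b⟩ := v
  by_cases ha : a = 0
  · subst ha
    obtain ⟨c, rfl⟩ := hv2
    refine .inr (mem_of_mem_zpowers_of_prime_orderOf (by rwa [orderOf_nuSq hq.ne_zero]) ?_
      (addRight_eq_one_iff.not.2 hv) hvN)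
    rw [nuSq_eq_addRight]
    refine addRight_mem_zpowers ⟨c.cast, ?_⟩
    simp [zsmul_eq_mul, mul_two]
  · have hcomm := hN.commutator_mem sigmaNu_mem_Hgroup hvN
    rw [sigmaNu_commutator_addRight] at hcomm
    refine .inl (mem_of_mem_zpowers_of_prime_orderOf (by rwa [orderOf_mu]) ?_ ?_ hcomm)
    · rw [mu_eq_addRight]
      refine addRight_mem_zpowers ⟨(-(a + a)).cast, ?_⟩
      simp [zsmul_eq_mul]
    · simpa [addRight_eq_one_iff, ZMod.add_self_eq_zero_iff_eq_zero hpo] using ha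

theorem mu_mem_or_nuSq_mem_of_normalIn (hp : p.Prime) (hpo : Odd p) (hq : q.Prime)
    {N : Subgroup (Perm (ZMod p × ZMod (2 * q)))} (hN : NormalIn N (Hgroup p (2 * q)))
    (hN1 : N ≠ ⊥) : mu p (2 * q) ∈ N ∨ nuSq p (2 * q) ∈ N := by
  obtain ⟨g, hgN, hg1⟩ := N.bot_or_exists_ne_one.resolve_left hN1
  obtain ⟨e, f, a, b, rfl, hpar⟩ := Hgroup_le_affParitySubgroup (dvd_mul_right 2 q) (hN.1 hgN)
  suffices ∃ v : ZMod p × ZMod (2 * q), v ≠ 0 ∧ Even v.2 ∧ Equiv.addRight v ∈ N from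
    let ⟨v, hv, hv2, hvN⟩ := this
    mu_mem_or_nuSq_mem_of_addRight_mem hp hpo hq hN hv hv2 hvN
  cases e with
  | true =>
    have : Fact (1 < p) := ⟨hp.one_lt⟩
    refine ⟨(1 + 1, 0), ?_, Even.zero, ?_⟩
    · simp [ZMod.add_self_eq_zero_iff_eq_zero hpo]
    · simpa [mu_commutator_affPerm_true] using hN.commutator_mem mu_mem_Hgroup hgN
  | false =>
    cases f with
    | true =>
      refine ⟨(-(a + a), 2), by simp [two_ne_zero_zmod_two_mul hq.one_lt], even_two, ?_⟩
      simpa [sigmaNu_commutator_affPerm_false_true] using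
        hN.commutator_mem sigmaNu_mem_Hgroup hgN
    | false =>
      rw [affPerm_false_false] at hg1 hgN
      refine ⟨(a, b), fun h => hg1 (by rw [h, addRight_zero]), ?_, hgN⟩
      exact even_of_castHom_eq_zero (dvd_mul_right 2 q) (by simpa using hpar.symm)

end MinimalNormal

theorem stmt15_general (p q : ℕ) (hp : p.Prime) (hpo : Odd p) (hq : q.Prime)
    (M : Subgroup (Equiv.Perm (ZMod p × ZMod (2 * q)))) :
    IsMinimalNormalIn M (Hgroup p (2 * q)) ↔
      (M = Subgroup.closure {mu p (2 * q)} ∨ M = Subgroup.closure {nuSq p (2 * q)}) := by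
  have hμ : IsMinimalNormalIn (zpowers (mu p (2 * q))) (Hgroup p (2 * q)) :=
    isMinimalNormalIn_zpowers (by rwa [orderOf_mu]) normalIn_zpowers_mu
  have hν : IsMinimalNormalIn (zpowers (nuSq p (2 * q))) (Hgroup p (2 * q)) :=
    isMinimalNormalIn_zpowers (by rwa [orderOf_nuSq hq.ne_zero]) normalIn_zpowers_nuSq
  simp only [← zpowers_eq_closure]
  refine ⟨fun hM => ?_, ?_⟩
  · rcases mu_mem_or_nuSq_mem_of_normalIn hp hpo hq hM.1 hM.2.1 with h | h
    · exact .inl (hM.eq_of_le hμ (zpowers_le.2 h))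
    · exact .inr (hM.eq_of_le hν (zpowers_le.2 h))
  · rintro (rfl | rfl)
    exacts [hμ, hν]

/-- the minimal normal subgroups of `H(p,2q)` are exactly `⟨μ⟩` and `⟨ν²⟩`. -/
theorem stmt15 (p q : ℕ) (hp : p.Prime) (hpo : Odd p) (hq : q.Prime) (hqo : Odd q)
    (M : Subgroup (Equiv.Perm (ZMod p × ZMod (2 * q)))) :
    IsMinimalNormalIn M (Hgroup p (2 * q)) ↔
      (M = Subgroup.closure {mu p (2 * q)} ∨ M = Subgroup.closure {nuSq p (2 * q)}) :=
  stmt15_general p q hp hpo hq M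

end OG4
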